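/- Let n ≥ 1, let β^(2n) = (β_{ij})_{0≤i+j≤2n} be a real sequence, let Ψ(x,y) = (a+bx+cy, d+ex+fy) with bf − ce ≠ 0, and let β̃^(2n) be the transformed sequence β̃_{ij} := L_β(Ψ₁^i Ψ₂^j). Then the moment matrix M̃(n) of β̃ is positive semidefinite if and only if the moment matrix M(n) of β is positive semidefinite. -/

import Mathlib

/-!
The quadratic form of `M(n)` is `v ↦ L_β(p_v²)`, where `p_v = Σ v_{ij} x^i y^j` runs over all
polynomials of degree at most `n`; so `M(n) ⪰ 0` iff `L_β(p²) ≥ 0` whenever `deg p ≤ n`.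
Since `L_β̃(p) = L_β(p ∘ Ψ)` and composing with the affine map `Ψ` does not raise degrees,
`M(n) ⪰ 0` implies `M̃(n) ⪰ 0`. The converse is the same implication for `Ψ⁻¹`, since
transforming `β̃` by `Ψ⁻¹` gives back `β`.
-/

/-- Index set for the moment matrix of degree `n`:
pairs `(i,j)` of nonnegative integers with `i + j ≤ n`. -/
abbrev MIdx (n : ℕ) := {ij : Fin (n+1) × Fin (n+1) // (ij.1 : ℕ) + (ij.2 : ℕ) ≤ n}

/-- The moment matrix `M(n)` of a real sequence `β = (β_{ij})`:
`M(n)[(i,j),(k,l)] = β_{i+k, j+l}`. -/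
def momentMatrix (n : ℕ) (β : ℕ → ℕ → ℝ) : Matrix (MIdx n) (MIdx n) ℝ :=
  fun p q => β ((p.val.1 : ℕ) + (q.val.1 : ℕ)) ((p.val.2 : ℕ) + (q.val.2 : ℕ))
open MvPolynomial

/-- The Riesz functional of a sequence `β`: `L_β(Σ p_{ij} x^i y^j) = Σ p_{ij} β_{ij}`. -/
noncomputable def riesz (β : ℕ → ℕ → ℝ) (p : MvPolynomial (Fin 2) ℝ) : ℝ :=
  ∑ m ∈ p.support, p.coeff m * β (m 0) (m 1)

/-- The sequence transformed by the degree-one map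
`Ψ(x,y) = (a + bx + cy, d + ex + fy)`:  `β̃_{ij} := L_β(Ψ₁^i Ψ₂^j)`. -/
noncomputable def transSeq (β : ℕ → ℕ → ℝ) (a b c d e f : ℝ) (i j : ℕ) : ℝ :=
  riesz β ((C a + C b * X 0 + C c * X 1) ^ i * (C d + C e * X 0 + C f * X 1) ^ j)

open Matrix

section Riesz

variable (β : ℕ → ℕ → ℝ)

noncomputable def rieszLinearMap : MvPolynomial (Fin 2) ℝ →ₗ[ℝ] ℝ :=
  Finsupp.linearCombination ℝ (fun m : Fin 2 →₀ ℕ => β (m 0) (m 1)) ∘ₗ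
    (AddMonoidAlgebra.coeffLinearEquiv ℝ).toLinearMap

theorem rieszLinearMap_apply (p : MvPolynomial (Fin 2) ℝ) :
    rieszLinearMap β p = riesz β p := by
  simp [rieszLinearMap, Finsupp.linearCombination_apply, riesz, sum_def]

theorem riesz_add (p q : MvPolynomial (Fin 2) ℝ) :
    riesz β (p + q) = riesz β p + riesz β q := by
  simp only [← rieszLinearMap_apply, map_add]

theorem riesz_sum {ι : Type*} (s : Finset ι) (p : ι → MvPolynomial (Fin 2) ℝ) :
    riesz β (∑ i ∈ s, p i) = ∑ i ∈ s, riesz β (p i) := by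
  simp only [← rieszLinearMap_apply, map_sum]

theorem riesz_C_mul (r : ℝ) (p : MvPolynomial (Fin 2) ℝ) :
    riesz β (C r * p) = r * riesz β p := by
  simp only [← rieszLinearMap_apply, C_mul', map_smul, smul_eq_mul]

theorem riesz_monomial (m : Fin 2 →₀ ℕ) (r : ℝ) :
    riesz β (monomial m r) = r * β (m 0) (m 1) := by
  rcases eq_or_ne r 0 with rfl | hr
  · simp [riesz]
  · simp [riesz, support_monomial, hr]

theorem riesz_X_pow_mul_X_pow (i j : ℕ) : riesz β (X 0 ^ i * X 1 ^ j) = β i j := by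
  simp [X_pow_eq_monomial, monomial_mul, riesz_monomial]

end Riesz

theorem totalDegree_aeval_le {σ τ R : Type*} [CommSemiring R] (g : σ → MvPolynomial τ R)
    (hg : ∀ i, (g i).totalDegree ≤ 1) (p : MvPolynomial σ R) :
    (aeval g p).totalDegree ≤ p.totalDegree := by
  conv_lhs => rw [p.as_sum, map_sum]
  refine totalDegree_finsetSum_le fun m hm => ?_
  rw [aeval_monomial, algebraMap_eq]
  calc _ ≤ (C (coeff m p) : MvPolynomial τ R).totalDegree
          + (m.prod fun i k => g i ^ k).totalDegree := totalDegree_mul _ _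
    _ ≤ 0 + m.sum fun _ k => k * 1 := by
        gcongr
        · exact (totalDegree_C _).le
        · refine (totalDegree_finsetProd _ _).trans (Finset.sum_le_sum fun i _ => ?_)
          exact (totalDegree_pow _ _).trans (Nat.mul_le_mul_left _ (hg i))
    _ ≤ p.totalDegree := by simpa using le_totalDegree hm

section MomentMatrix

variable {n : ℕ}

noncomputable def MIdx.exponent (q : MIdx n) : Fin 2 →₀ ℕ :=
  Finsupp.single 0 (q.1.1 : ℕ) + Finsupp.single 1 (q.1.2 : ℕ)

@[simp]
theorem MIdx.exponent_apply_zero (q : MIdx n) : q.exponent 0 = q.1.1 := by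
  simp [MIdx.exponent]

@[simp]
theorem MIdx.exponent_apply_one (q : MIdx n) : q.exponent 1 = q.1.2 := by
  simp [MIdx.exponent]

theorem MIdx.exponent_injective : Function.Injective (MIdx.exponent (n := n)) := by
  intro q q' h
  have h0 := DFunLike.congr_fun h 0
  have h1 := DFunLike.congr_fun h 1
  simp only [MIdx.exponent_apply_zero, MIdx.exponent_apply_one, Fin.val_inj] at h0 h1
  exact Subtype.ext (Prod.ext h0 h1)

theorem MIdx.exists_exponent_eq {m : Fin 2 →₀ ℕ} (hm : m 0 + m 1 ≤ n) :
    ∃ q : MIdx n, q.exponent = m := by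
  refine ⟨⟨(⟨m 0, by omega⟩, ⟨m 1, by omega⟩), hm⟩, ?_⟩
  ext i
  fin_cases i <;> simp

noncomputable def polyOfVec (v : MIdx n → ℝ) : MvPolynomial (Fin 2) ℝ :=
  ∑ q, monomial q.exponent (v q)

theorem totalDegree_polyOfVec_le (v : MIdx n → ℝ) : (polyOfVec v).totalDegree ≤ n := by
  refine totalDegree_finsetSum_le fun q _ => (totalDegree_monomial_le _ _).trans ?_
  simpa [Finsupp.sum_fintype] using q.2

theorem exists_polyOfVec_eq {p : MvPolynomial (Fin 2) ℝ} (hp : p.totalDegree ≤ n) :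
    ∃ v : MIdx n → ℝ, polyOfVec v = p := by
  classical
  refine ⟨fun q => coeff q.exponent p, ?_⟩
  have hsupp : p.support ⊆ Finset.univ.image MIdx.exponent := fun m hm => by
    have hdeg : m 0 + m 1 ≤ n := by simpa [Finsupp.sum_fintype] using (le_totalDegree hm).trans hp
    simpa using MIdx.exists_exponent_eq hdeg
  calc polyOfVec _ = ∑ m ∈ Finset.univ.image MIdx.exponent, monomial m (coeff m p) :=
        (Finset.sum_image (f := fun m => monomial m (coeff m p))
          fun q _ q' _ h => MIdx.exponent_injective h).symm
    _ = ∑ m ∈ p.support, monomial m (coeff m p) :=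
        (Finset.sum_subset hsupp fun m _ hm => by rw [notMem_support_iff.mp hm, monomial_zero]).symm
    _ = p := p.as_sum.symm

theorem dotProduct_momentMatrix_mulVec (β : ℕ → ℕ → ℝ) (v : MIdx n → ℝ) :
    v ⬝ᵥ momentMatrix n β *ᵥ v = riesz β (polyOfVec v * polyOfVec v) := by
  rw [polyOfVec, Finset.sum_mul_sum, riesz_sum]
  simp only [riesz_sum, monomial_mul, riesz_monomial, Finsupp.add_apply, MIdx.exponent_apply_zero,
    MIdx.exponent_apply_one]
  simp only [dotProduct, mulVec, momentMatrix, Finset.mul_sum]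
  exact Finset.sum_congr rfl fun p _ => Finset.sum_congr rfl fun q _ => by ring

theorem momentMatrix_isHermitian (β : ℕ → ℕ → ℝ) : (momentMatrix n β).IsHermitian := by
  ext p q
  simp [momentMatrix, add_comm]

theorem momentMatrix_posSemidef_iff (β : ℕ → ℕ → ℝ) :
    (momentMatrix n β).PosSemidef ↔
      ∀ p : MvPolynomial (Fin 2) ℝ, p.totalDegree ≤ n → 0 ≤ riesz β (p * p) := by
  refine ⟨fun h p hp => ?_, fun h => .of_dotProduct_mulVec_nonneg (momentMatrix_isHermitian β)
    fun v => ?_⟩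
  · obtain ⟨v, rfl⟩ := exists_polyOfVec_eq hp
    simpa [dotProduct_momentMatrix_mulVec] using h.dotProduct_mulVec_nonneg v
  · simpa [dotProduct_momentMatrix_mulVec] using h _ (totalDegree_polyOfVec_le v)

theorem momentMatrix_posSemidef_of_riesz_eq_riesz_comp {β β' : ℕ → ℕ → ℝ}
    (φ : MvPolynomial (Fin 2) ℝ →ₐ[ℝ] MvPolynomial (Fin 2) ℝ)
    (hφ : ∀ p, (φ p).totalDegree ≤ p.totalDegree) (hβ : ∀ p, riesz β' p = riesz β (φ p))
    (h : (momentMatrix n β).PosSemidef) : (momentMatrix n β').PosSemidef := by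
  rw [momentMatrix_posSemidef_iff] at h ⊢
  intro p hp
  rw [hβ, map_mul]
  exact h _ ((hφ p).trans hp)

end MomentMatrix

section DegreeOne

variable {R : Type*} [CommSemiring R]

noncomputable def linForm (a b c : R) : MvPolynomial (Fin 2) R :=
  C a + C b * X 0 + C c * X 1

theorem totalDegree_linForm_le (a b c : R) : (linForm a b c).totalDegree ≤ 1 := by
  have hX (r : R) (i : Fin 2) : (C r * X i : MvPolynomial (Fin 2) R).totalDegree ≤ 1 := by
    simpa [C_mul_X_eq_monomial] using totalDegree_monomial_le (Finsupp.single i 1) r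
  refine (totalDegree_add _ _).trans (max_le ((totalDegree_add _ _).trans (max_le ?_ (hX b 0)))
    (hX c 1))
  simp

theorem aeval_linForm_linForm (a b c d e f a' b' c' : R) :
    aeval ![linForm a b c, linForm d e f] (linForm a' b' c') =
      linForm (a' + b' * a + c' * d) (b' * b + c' * e) (b' * c + c' * f) := by
  simp only [linForm, map_add, map_mul, aeval_C, aeval_X, algebraMap_eq, Matrix.cons_val_zero,
    Matrix.cons_val_one]
  ring

end DegreeOne

section Transform

variable (β : ℕ → ℕ → ℝ) (a b c d e f : ℝ)

theorem transSeq_eq (i j : ℕ) :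
    transSeq β a b c d e f i j = riesz β (linForm a b c ^ i * linForm d e f ^ j) :=
  rfl

theorem riesz_transSeq (p : MvPolynomial (Fin 2) ℝ) :
    riesz (transSeq β a b c d e f) p = riesz β (aeval ![linForm a b c, linForm d e f] p) := by
  induction p using MvPolynomial.induction_on' with
  | monomial m r =>
    rw [riesz_monomial, aeval_monomial, algebraMap_eq, riesz_C_mul,
      Finsupp.prod_fintype _ _ fun _ => pow_zero _, Fin.prod_univ_two, transSeq_eq]
    rfl
  | add p q hp hq => rw [riesz_add, map_add, riesz_add, hp, hq]

theorem momentMatrix_transSeq_posSemidef {n : ℕ} (h : (momentMatrix n β).PosSemidef) :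
    (momentMatrix n (transSeq β a b c d e f)).PosSemidef :=
  momentMatrix_posSemidef_of_riesz_eq_riesz_comp _
    (totalDegree_aeval_le _ (by simp [Fin.forall_fin_two, totalDegree_linForm_le]))
    (riesz_transSeq β a b c d e f) h

theorem transSeq_transSeq (a' b' c' d' e' f' : ℝ) :
    transSeq (transSeq β a b c d e f) a' b' c' d' e' f' =
      transSeq β (a' + b' * a + c' * d) (b' * b + c' * e) (b' * c + c' * f)
        (d' + e' * a + f' * d) (e' * b + f' * e) (e' * c + f' * f) := by
  funext i j
  rw [transSeq_eq, riesz_transSeq, map_mul, map_pow, map_pow, aeval_linForm_linForm,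
    aeval_linForm_linForm, transSeq_eq]

theorem transSeq_id : transSeq β 0 1 0 0 0 1 = β := by
  funext i j
  simp [transSeq, riesz_X_pow_mul_X_pow]

/-- The six parameters are the coefficients of the inverse affine map `Ψ⁻¹`. -/
theorem transSeq_transSeq_inv (hdet : b * f - c * e ≠ 0) :
    transSeq (transSeq β a b c d e f)
      ((c * d - a * f) / (b * f - c * e)) (f / (b * f - c * e)) (-c / (b * f - c * e))
      ((a * e - b * d) / (b * f - c * e)) (-e / (b * f - c * e)) (b / (b * f - c * e)) = β := by
  rw [transSeq_transSeq]
  set D := b * f - c * e with hD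
  convert transSeq_id β using 2 <;> field_simp <;> rw [hD] <;> ring

end Transform

theorem momentMatrix_transform_posSemidef_iff_general
    (n : ℕ) (β : ℕ → ℕ → ℝ) (a b c d e f : ℝ)
    (hdet : b * f - c * e ≠ 0) :
    (momentMatrix n (transSeq β a b c d e f)).PosSemidef ↔
      (momentMatrix n β).PosSemidef := by
  refine ⟨fun h => ?_, momentMatrix_transSeq_posSemidef β a b c d e f⟩
  rw [← transSeq_transSeq_inv β a b c d e f hdet]
  exact momentMatrix_transSeq_posSemidef _ _ _ _ _ _ _ h

/-- Invariance under degree-one transformations, part (3).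
`M̃(n) ≥ 0 ⟺ M(n) ≥ 0`. -/
theorem momentMatrix_transform_posSemidef_iff
    (n : ℕ) (hn : 1 ≤ n) (β : ℕ → ℕ → ℝ) (a b c d e f : ℝ)
    (hdet : b * f - c * e ≠ 0) :
    (momentMatrix n (transSeq β a b c d e f)).PosSemidef ↔
      (momentMatrix n β).PosSemidef :=
  momentMatrix_transform_posSemidef_iff_general n β a b c d e f hdet
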